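/- If there exist a partition of Z_v into q sets whose outer differences each occur at least ρ times (an FHS(v,v−ρ;q)) and a cyclic difference set DS(v',m',λ'), then there exists a DSS over Z_{vv'} of index min(ρm', vλ') and redundancy rate m'/v', based on qm' sets. -/

import Mathlib

/-- Number of occurrences of `d` as an outer difference (difference of elements
from distinct member sets) in the family `Q`. -/
def outerCount {G ι : Type*} [AddCommGroup G] [DecidableEq G] [Fintype ι] [DecidableEq ι]
    (Q : ι → Finset G) (d : G) : ℕ :=
  ∑ i : ι, ∑ j : ι, if i = j then 0 else ((Q i ×ˢ Q j).filter (fun p => p.1 - p.2 = d)).card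

/-- Number of occurrences of `d` as an inner difference (difference of two distinct
elements of a single member set) in the family `Q`. -/
def innerCount {G ι : Type*} [AddCommGroup G] [DecidableEq G] [Fintype ι]
    (Q : ι → Finset G) (d : G) : ℕ :=
  ∑ i : ι, ((Q i ×ˢ Q i).filter (fun p => p.1 - p.2 = d ∧ p.1 ≠ p.2)).card

/-!
Embed `Z_v` in `Z_{vv'}` as the subgroup `v'·Z_{vv'}`, the kernel of reduction mod `v'`, and place
a copy of the partition `Q` in each coset lying over an element of `D`. A nonzero difference in
the subgroup is the image of a nonzero `α ∈ Z_v`, and each of the `m'` copies of `Q` realises it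
at least `ρ` times between distinct blocks. Any other difference `d` reduces to a nonzero
`d̄ ∈ Z_{v'}`; each of the `λ'` pairs `(k, l) ∈ D²` with `k - l = d̄` joins two distinct cosets, and
because `Q` partitions `Z_v`, every point of the coset over `k` has exactly one partner in the
coset over `l` at difference `d`, giving `v` occurrences per pair.
-/

open Finset

theorem sum_sum_of_partition {α ι M : Type*} [Fintype α] [Fintype ι] [AddCommMonoid M]
    {Q : ι → Finset α} (hdisj : ∀ i j, i ≠ j → Disjoint (Q i) (Q j))
    (hcover : ∀ x, ∃ i, x ∈ Q i) (f : α → M) :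
    ∑ i, ∑ x ∈ Q i, f x = ∑ x, f x := by
  classical
  have hunion : univ.biUnion Q = univ :=
    eq_univ_of_forall fun x => mem_biUnion.2 <| (hcover x).imp fun i hi => ⟨mem_univ i, hi⟩
  rw [← sum_biUnion fun i _ j _ hij => hdisj i j hij, hunion]

section DiffCount

variable {A G : Type*} [AddCommGroup A] [AddCommGroup G] [DecidableEq A] [DecidableEq G]

def diffCount (s t : Finset G) (d : G) : ℕ :=
  ((s ×ˢ t).filter (fun p => p.1 - p.2 = d)).card

theorem diffCount_eq_sum (s t : Finset G) (d : G) :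
    diffCount s t d = ∑ x ∈ s, ∑ y ∈ t, if x - y = d then 1 else 0 := by
  rw [diffCount, card_filter, sum_product]

theorem diffCount_eq_card_filter_ne {d : G} (hd : d ≠ 0) (s t : Finset G) :
    diffCount s t d = ((s ×ˢ t).filter (fun p => p.1 - p.2 = d ∧ p.1 ≠ p.2)).card := by
  refine congrArg card (filter_congr fun p _ => ?_)
  exact (and_iff_left_of_imp fun h hp => hd (by rw [← h, hp, sub_self])).symm

theorem diffCount_image_translate {g : A →+ G} (hg : Function.Injective g)
    (s t : Finset A) (x y : G) (α : A) :
    diffCount (s.image (fun a => g a + x)) (t.image (fun a => g a + y)) (g α + (x - y))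
      = diffCount s t α := by
  have hinj : Function.Injective (Prod.map (fun a => g a + x) (fun a => g a + y)) :=
    (add_left_injective x |>.comp hg).prodMap (add_left_injective y |>.comp hg)
  rw [diffCount, ← prodMap_image_product, filter_image, card_image_of_injective _ hinj, diffCount]
  congr 1
  refine filter_congr fun p _ => ?_
  rw [Prod.map_fst, Prod.map_snd, add_sub_add_comm, add_left_inj, ← map_sub, hg.eq_iff]

theorem sum_diffCount_of_partition {ι : Type*} [Fintype A] [Fintype ι] {Q : ι → Finset A}
    (hdisj : ∀ i j, i ≠ j → Disjoint (Q i) (Q j)) (hcover : ∀ x, ∃ i, x ∈ Q i) (α : A) :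
    ∑ i, ∑ j, diffCount (Q i) (Q j) α = Fintype.card A := by
  simp only [diffCount_eq_sum]
  calc ∑ i, ∑ j, ∑ x ∈ Q i, ∑ y ∈ Q j, (if x - y = α then 1 else 0)
      = ∑ i, ∑ x ∈ Q i, ∑ j, ∑ y ∈ Q j, (if x - y = α then 1 else 0) :=
        sum_congr rfl fun _ _ => sum_comm
    _ = ∑ x, ∑ y, (if x - y = α then 1 else 0) := by
        simp only [sum_sum_of_partition hdisj hcover]
    _ = Fintype.card A := by
        simp only [sub_eq_iff_comm, sum_ite_eq, mem_univ, if_true, sum_const, card_univ,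
          smul_eq_mul, mul_one]

end DiffCount

section OuterCount

variable {G ι κ : Type*} [AddCommGroup G] [DecidableEq G] [Fintype ι] [DecidableEq ι]
  [Fintype κ] [DecidableEq κ]

theorem outerCount_eq_sum_diffCount (S : ι → Finset G) (d : G) :
    outerCount S d = ∑ i, ∑ j, if i = j then 0 else diffCount (S i) (S j) d :=
  rfl

theorem outerCount_comp_equiv {ι' : Type*} [Fintype ι'] [DecidableEq ι'] (S : ι → Finset G)
    (e : ι' ≃ ι) (d : G) : outerCount (S ∘ e) d = outerCount S d := by
  unfold outerCount
  refine Fintype.sum_equiv e _ _ fun i => Fintype.sum_equiv e _ _ fun j => ?_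
  simp only [Function.comp_apply, e.injective.eq_iff]

theorem outerCount_prod (S : ι × κ → Finset G) (d : G) :
    outerCount S d = ∑ k, ∑ l, ∑ i, ∑ j,
      if (i, k) = (j, l) then 0 else diffCount (S (i, k)) (S (j, l)) d := by
  simp only [outerCount_eq_sum_diffCount, Fintype.sum_prod_type_right]
  exact sum_congr rfl fun _ _ => sum_comm

theorem sum_outerCount_slice_le (S : ι × κ → Finset G) (d : G) :
    ∑ k, outerCount (fun i => S (i, k)) d ≤ outerCount S d := by
  rw [outerCount_prod]
  refine sum_le_sum fun k _ => ?_
  calc outerCount (fun i => S (i, k)) d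
      = ∑ i, ∑ j, if (i, k) = (j, k) then 0 else diffCount (S (i, k)) (S (j, k)) d := by
        simp only [outerCount_eq_sum_diffCount, Prod.mk.injEq, and_true]
    _ ≤ _ := single_le_sum (f := fun l => ∑ i, ∑ j,
        if (i, k) = (j, l) then 0 else diffCount (S (i, k)) (S (j, l)) d)
        (fun _ _ => Nat.zero_le _) (mem_univ k)

theorem sum_diffCount_le_outerCount (S : ι × κ → Finset G) (d : G) (R : κ → κ → Prop)
    [DecidableRel R] (hR : ∀ k l, R k l → k ≠ l) :
    ∑ k, ∑ l, (if R k l then ∑ i, ∑ j, diffCount (S (i, k)) (S (j, l)) d else 0)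
      ≤ outerCount S d := by
  rw [outerCount_prod]
  refine sum_le_sum fun k _ => sum_le_sum fun l _ => ?_
  split_ifs with hkl
  · exact (sum_congr rfl fun i _ => sum_congr rfl fun j _ =>
      (if_neg fun h => hR k l hkl (Prod.ext_iff.1 h).2).symm).le
  · exact Nat.zero_le _

end OuterCount

section LiftBlocks

variable {A G K ι : Type*} [AddCommGroup A] [AddCommGroup G] {g : A →+ G} {c : K → G}

theorem eq_and_eq_of_add_eq_add [AddCommGroup K] {π : G →+ K} (hg : Function.Injective g)
    (hgπ : Function.Exact g π) (hc : ∀ k, π (c k) = k) {a b : A} {k l : K}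
    (h : g a + c k = g b + c l) : a = b ∧ k = l := by
  have hkl : k = l := by
    simpa only [map_add, hgπ.apply_apply_eq_zero, zero_add, hc] using congrArg π h
  subst hkl
  exact ⟨hg (add_right_cancel h), rfl⟩

variable [DecidableEq G]

def liftBlocks (g : A →+ G) (c : K → G) (Q : ι → Finset A) (D : Finset K) (p : ι × D) :
    Finset G :=
  (Q p.1).image fun a => g a + c p.2

theorem liftBlocks_disjoint [AddCommGroup K] {π : G →+ K} (hg : Function.Injective g)
    (hgπ : Function.Exact g π) (hc : ∀ k, π (c k) = k) {Q : ι → Finset A}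
    (hdisj : ∀ i j, i ≠ j → Disjoint (Q i) (Q j)) (D : Finset K) {p r : ι × D} (hpr : p ≠ r) :
    Disjoint (liftBlocks g c Q D p) (liftBlocks g c Q D r) := by
  simp only [liftBlocks, disjoint_left, mem_image, not_exists, not_and]
  rintro _ ⟨a, ha, rfl⟩ b hb hab
  obtain ⟨rfl, hk⟩ := eq_and_eq_of_add_eq_add hg hgπ hc hab
  have hi : r.1 ≠ p.1 := fun hi => hpr (Prod.ext hi.symm (Subtype.ext hk.symm))
  exact disjoint_left.1 (hdisj _ _ hi) hb ha

theorem card_biUnion_liftBlocks [Fintype A] [Fintype ι] [AddCommGroup K] {π : G →+ K}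
    (hg : Function.Injective g) (hgπ : Function.Exact g π) (hc : ∀ k, π (c k) = k)
    {Q : ι → Finset A} (hcover : ∀ x, ∃ i, x ∈ Q i) (D : Finset K) :
    (univ.biUnion (liftBlocks g c Q D)).card = Fintype.card A * D.card := by
  have hunion : univ.biUnion (liftBlocks g c Q D)
      = (univ : Finset (A × D)).image fun p => g p.1 + c p.2 := by
    ext x
    simp only [liftBlocks, mem_biUnion, mem_univ, true_and, mem_image, Prod.exists]
    constructor
    · rintro ⟨i, k, a, -, rfl⟩
      exact ⟨a, k, rfl⟩
    · rintro ⟨a, k, rfl⟩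
      obtain ⟨i, hi⟩ := hcover a
      exact ⟨i, k, a, hi, rfl⟩
  have hinj : Function.Injective fun p : A × D => g p.1 + c p.2 := fun p r h => by
    obtain ⟨ha, hk⟩ := eq_and_eq_of_add_eq_add hg hgπ hc h
    exact Prod.ext ha (Subtype.ext hk)
  rw [hunion, card_image_of_injective _ hinj, card_univ, Fintype.card_prod, Fintype.card_coe]

variable [DecidableEq A] [Fintype ι] [DecidableEq ι]

theorem outerCount_liftBlocks_slice (hg : Function.Injective g) (Q : ι → Finset A)
    (D : Finset K) (k : D) (α : A) :
    outerCount (fun i => liftBlocks g c Q D (i, k)) (g α) = outerCount Q α := by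
  simp only [outerCount_eq_sum_diffCount, liftBlocks]
  rw [← add_zero (g α), ← sub_self (c k)]
  simp only [diffCount_image_translate hg]

variable [DecidableEq K]

theorem card_mul_outerCount_le_outerCount_liftBlocks (hg : Function.Injective g)
    (Q : ι → Finset A) (D : Finset K) (α : A) :
    D.card * outerCount Q α ≤ outerCount (liftBlocks g c Q D) (g α) := by
  calc D.card * outerCount Q α
      = ∑ k : D, outerCount (fun i => liftBlocks g c Q D (i, k)) (g α) := by
        simp only [outerCount_liftBlocks_slice hg, sum_const, card_univ, Fintype.card_coe,
          smul_eq_mul]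
    _ ≤ _ := sum_outerCount_slice_le _ _

theorem card_mul_diffCount_le_outerCount_liftBlocks [Fintype A] [AddCommGroup K] {π : G →+ K}
    (hg : Function.Injective g) (hgπ : Function.Exact g π) (hc : ∀ k, π (c k) = k)
    {Q : ι → Finset A} (hdisj : ∀ i j, i ≠ j → Disjoint (Q i) (Q j)) (hcover : ∀ x, ∃ i, x ∈ Q i)
    (D : Finset K) {δ : G} (hδ : π δ ≠ 0) :
    Fintype.card A * diffCount D D (π δ) ≤ outerCount (liftBlocks g c Q D) δ := by
  have hblocks : ∀ k l : K, k - l = π δ → ∑ i, ∑ j,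
      diffCount ((Q i).image fun a => g a + c k) ((Q j).image fun a => g a + c l) δ
        = Fintype.card A := by
    intro k l hkl
    obtain ⟨α, hα⟩ := (hgπ (δ - (c k - c l))).1 (by rw [map_sub, map_sub, hc, hc, hkl, sub_self])
    rw [show δ = g α + (c k - c l) by rw [hα, sub_add_cancel]]
    simp only [diffCount_image_translate hg]
    exact sum_diffCount_of_partition hdisj hcover α
  calc Fintype.card A * diffCount D D (π δ)
      = ∑ k : D, ∑ l : D, if (k : K) - l = π δ then Fintype.card A else 0 := by
        simp only [diffCount_eq_sum, ← sum_coe_sort D, mul_sum, mul_ite, mul_one, mul_zero]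
    _ = ∑ k : D, ∑ l : D, if (k : K) - l = π δ then
          ∑ i, ∑ j, diffCount (liftBlocks g c Q D (i, k)) (liftBlocks g c Q D (j, l)) δ
        else 0 := by
        refine sum_congr rfl fun k _ => sum_congr rfl fun l _ => ?_
        split_ifs with hkl
        exacts [(hblocks k l hkl).symm, rfl]
    _ ≤ _ := sum_diffCount_le_outerCount _ _ _ fun k l hkl hkl' => hδ <| by
        rw [← hkl, hkl', sub_self]

end LiftBlocks

namespace ZMod

def mulLeftHom (v v' : ℕ) : ZMod v →+ ZMod (v * v') :=
  lift v ⟨(AddMonoidHom.mulLeft (v' : ZMod (v * v'))).comp (Int.castAddHom _), by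
    simp only [AddMonoidHom.comp_apply, Int.coe_castAddHom, AddMonoidHom.coe_mulLeft,
      Int.cast_natCast, ← Nat.cast_mul, mul_comm v', natCast_self]⟩

variable {v v' : ℕ}

theorem mulLeftHom_intCast (n : ℤ) : mulLeftHom v v' n = v' * n :=
  lift_coe _ _ _

theorem mulLeftHom_injective (hv' : v' ≠ 0) : Function.Injective (mulLeftHom v v') := by
  refine (injective_iff_map_eq_zero _).2 fun a ha => ?_
  obtain ⟨n, rfl⟩ := intCast_surjective a
  rw [mulLeftHom_intCast, ← Int.cast_natCast, ← Int.cast_mul,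
    intCast_zmod_eq_zero_iff_dvd, Nat.cast_mul, mul_comm (v : ℤ)] at ha
  exact (intCast_zmod_eq_zero_iff_dvd _ _).2
    ((mul_dvd_mul_iff_left (by exact_mod_cast hv')).1 ha)

theorem exact_mulLeftHom_castHom :
    Function.Exact (mulLeftHom v v') (castHom (dvd_mul_left v' v) (ZMod v')).toAddMonoidHom := by
  intro y
  obtain ⟨n, rfl⟩ := intCast_surjective y
  rw [RingHom.toAddMonoidHom_eq_coe, AddMonoidHom.coe_coe, map_intCast,
    intCast_zmod_eq_zero_iff_dvd, Set.mem_range]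
  constructor
  · rintro ⟨k, rfl⟩
    exact ⟨k, by rw [mulLeftHom_intCast]; push_cast; rfl⟩
  · rintro ⟨a, ha⟩
    obtain ⟨k, rfl⟩ := intCast_surjective a
    rw [mulLeftHom_intCast, ← Int.cast_natCast, ← Int.cast_mul,
      intCast_eq_intCast_iff_dvd_sub] at ha
    have hv'n : (v' : ℤ) ∣ n - v' * k := (Int.natCast_dvd_natCast.2 (dvd_mul_left v' v)).trans ha
    exact (dvd_sub_left (dvd_mul_right _ k)).1 hv'n

end ZMod

theorem stmt_4 (v v' q m' lam' ρ : ℕ) [NeZero v] (hv' : 0 < v')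
    (Q : Fin q → Finset (ZMod v))
    -- the FHS: a partition of Z_v into q sets forming a DSS of index ρ
    (hQdisj : ∀ i j, i ≠ j → Disjoint (Q i) (Q j))
    (hQcover : ∀ x : ZMod v, ∃ i, x ∈ Q i)
    (hQidx : ∀ d : ZMod v, d ≠ 0 → ρ ≤ outerCount Q d)
    -- the cyclic difference set DS(v',m',λ')
    (D : Finset (ZMod v')) (hDcard : D.card = m')
    (hD : ∀ d : ZMod v', d ≠ 0 →
      ((D ×ˢ D).filter (fun p => p.1 - p.2 = d ∧ p.1 ≠ p.2)).card = lam') :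
    -- there is a DSS over Z_{vv'} on q·m' sets, of redundancy rate m'/v'
    -- (i.e., using v·v'·m'/v' = v·m' symbols), and of index min(ρm', vλ')
    ∃ S : Fin (q * m') → Finset (ZMod (v * v')),
      (∀ a b, a ≠ b → Disjoint (S a) (S b)) ∧
      (Finset.univ.biUnion S).card = v * m' ∧
      (∀ d : ZMod (v * v'), d ≠ 0 → min (ρ * m') (v * lam') ≤ outerCount S d) := by
  have : NeZero v' := ⟨hv'.ne'⟩
  set π := (ZMod.castHom (dvd_mul_left v' v) (ZMod v')).toAddMonoidHom
  have hg := ZMod.mulLeftHom_injective (v := v) hv'.ne'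
  have hgπ : Function.Exact (ZMod.mulLeftHom v v') π := ZMod.exact_mulLeftHom_castHom
  -- `k ↦ k.val` picks the representatives 0, …, v' - 1 of the cosets of v'·Z_{vv'} ≅ Z_v.
  have hc (k : ZMod v') : π (k.val : ZMod (v * v')) = k := by
    simp only [π, RingHom.toAddMonoidHom_eq_coe, AddMonoidHom.coe_coe, map_natCast,
      ZMod.natCast_zmod_val]
  let e : Fin (q * m') ≃ Fin q × D :=
    finProdFinEquiv.symm.trans ((Equiv.refl _).prodCongr (D.equivFinOfCardEq hDcard).symm)
  set S := liftBlocks (ZMod.mulLeftHom v v') (fun k : ZMod v' => (k.val : ZMod (v * v'))) Q D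
  refine ⟨S ∘ e, fun a b hab => liftBlocks_disjoint hg hgπ hc hQdisj D (e.injective.ne hab),
    ?_, fun d hd => ?_⟩
  · change (univ.biUnion fun k => S (e k)).card = _
    rw [← image_biUnion, image_univ_equiv, card_biUnion_liftBlocks hg hgπ hc hQcover, ZMod.card,
      hDcard]
  · rw [outerCount_comp_equiv]
    by_cases hπd : π d = 0
    · obtain ⟨α, rfl⟩ := (hgπ d).1 hπd
      have hα : α ≠ 0 := by rintro rfl; exact hd (map_zero _)
      calc min (ρ * m') (v * lam') ≤ m' * outerCount Q α :=
            (min_le_left _ _).trans (by rw [mul_comm]; exact Nat.mul_le_mul_left _ (hQidx α hα))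
        _ ≤ outerCount S (ZMod.mulLeftHom v v' α) :=
            hDcard ▸ card_mul_outerCount_le_outerCount_liftBlocks hg Q D α
    · have hlam : diffCount D D (π d) = lam' := by
        rw [diffCount_eq_card_filter_ne hπd, hD _ hπd]
      calc min (ρ * m') (v * lam') ≤ v * lam' := min_le_right _ _
        _ ≤ outerCount S d := by
            simpa only [ZMod.card, hlam] using
              card_mul_diffCount_le_outerCount_liftBlocks hg hgπ hc hQdisj hQcover D hπd
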